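/- Let p, u, v, w, q, z be real numbers. Define F : ℝ³ → Matrix 3 3 ℝ by F(y) = [[p, (u + v·y₁)·e^{−y₁}, v·e^{−y₁}], [(w + z·y₁)·e^{−y₁}, q·e^{−2y₁}, 0], [z·e^{−y₁}, 0, 0]], let B(y) = (F(y) − F(y)ᵀ)/2 be its antisymmetric part, and define the torsion H_{ijk}(y) = ∂_{y_i}B_{jk}(y) + ∂_{y_j}B_{ki}(y) + ∂_{y_k}B_{ij}(y). Then H_{ijk}(y) = 0 for all indices i,j,k ∈ {1,2,3} and all y ∈ ℝ³, i.e. the sigma model on the Manin triple (4|1) is torsionless. -/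

import Mathlib

open Real Matrix

/-- The torsion potential of a sigma model tensor `F`: its antisymmetric part. -/
noncomputable def Bpot (F : (Fin 3 → ℝ) → Matrix (Fin 3) (Fin 3) ℝ)
    (y : Fin 3 → ℝ) : Matrix (Fin 3) (Fin 3) ℝ :=
  (1 / 2 : ℝ) • (F y - (F y)ᵀ)

/-- The torsion `H_{ijk} = ∂ᵢ B_{jk} + ∂ⱼ B_{ki} + ∂ₖ B_{ij}` of a sigma model
tensor `F`, where `∂ᵢ` is the partial derivative in the `i`-th coordinate. -/
noncomputable def torsionH (F : (Fin 3 → ℝ) → Matrix (Fin 3) (Fin 3) ℝ)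
    (y : Fin 3 → ℝ) (i j k : Fin 3) : ℝ :=
  deriv (fun t => Bpot F (Function.update y i t) j k) (y i) +
  deriv (fun t => Bpot F (Function.update y j t) k i) (y j) +
  deriv (fun t => Bpot F (Function.update y k t) i j) (y k)

/-- The tensor `F` of the sigma model on the Manin triple `(4|1)`. -/
noncomputable def F41 (p u v w q z : ℝ) (y : Fin 3 → ℝ) : Matrix (Fin 3) (Fin 3) ℝ :=
  !![p,                             (u + v * y 0) * exp (-(y 0)), v * exp (-(y 0));
     (w + z * y 0) * exp (-(y 0)),  q * exp (-(2 * y 0)),         0;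
     z * exp (-(y 0)),              0,                            0]

/-!
`F41` depends on `y` only through `y 0`, so the only partial derivative of `B` that can be
nonzero is `∂₀`. By total antisymmetry a nonzero component of `H` has distinct indices, so
up to sign it is `H₀₁₂ = ∂₀ B₁₂`; and `B₁₂ = 0` because the lower-right `2 × 2` block of
`F41` is symmetric.
-/

open Function

section

variable (F : (Fin 3 → ℝ) → Matrix (Fin 3) (Fin 3) ℝ) (y : Fin 3 → ℝ)

lemma Bpot_apply_swap (a b : Fin 3) : Bpot F y b a = -Bpot F y a b := by
  simp only [Bpot, Matrix.smul_apply, Matrix.sub_apply, transpose_apply, smul_eq_mul]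
  ring

lemma Bpot_apply_self (a : Fin 3) : Bpot F y a a = 0 := by
  linarith [Bpot_apply_swap F y a a]

lemma deriv_Bpot_swap (i a b : Fin 3) :
    deriv (fun t => Bpot F (update y i t) b a) (y i)
      = -deriv (fun t => Bpot F (update y i t) a b) (y i) := by
  simp only [Bpot_apply_swap F _ a b, deriv.fun_neg]

lemma torsionH_rotate (i j k : Fin 3) : torsionH F y i j k = torsionH F y j k i := by
  unfold torsionH
  ring

lemma torsionH_self_left (i k : Fin 3) : torsionH F y i i k = 0 := by
  simp only [torsionH, deriv_Bpot_swap F y i k i, Bpot_apply_self, deriv_const]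
  ring

lemma torsionH_self_right (i j : Fin 3) : torsionH F y i j i = 0 := by
  rw [torsionH_rotate, torsionH_rotate, torsionH_self_left]

end

section DependsOnFirst

variable {F : (Fin 3 → ℝ) → Matrix (Fin 3) (Fin 3) ℝ}

lemma deriv_Bpot_update_of_ne (hF : ∀ y y' : Fin 3 → ℝ, y 0 = y' 0 → F y = F y')
    (y : Fin 3 → ℝ) {i : Fin 3} (hi : i ≠ 0) (a b : Fin 3) :
    deriv (fun t => Bpot F (update y i t) a b) (y i) = 0 := by
  have hconst : ∀ t, F (update y i t) = F y := fun t => hF _ _ (update_of_ne hi.symm _ _)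
  simp only [Bpot, hconst, deriv_const]

lemma torsionH_zero_eq_zero (hF : ∀ y y' : Fin 3 → ℝ, y 0 = y' 0 → F y = F y')
    (hsymm : ∀ y (a b : Fin 3), a ≠ 0 → b ≠ 0 → F y a b = F y b a) (y : Fin 3 → ℝ)
    (j k : Fin 3) : torsionH F y 0 j k = 0 := by
  rcases eq_or_ne j 0 with rfl | hj
  · exact torsionH_self_left F y 0 k
  rcases eq_or_ne k 0 with rfl | hk
  · exact torsionH_self_right F y 0 j
  have hB : ∀ x, Bpot F x j k = 0 := fun x => by
    simp only [Bpot, Matrix.smul_apply, Matrix.sub_apply, transpose_apply, hsymm x j k hj hk,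
      sub_self, smul_zero]
  simp only [torsionH, hB, deriv_const, deriv_Bpot_update_of_ne hF y hj,
    deriv_Bpot_update_of_ne hF y hk, add_zero]

theorem torsionH_eq_zero_of_depends_only_on_first
    (hF : ∀ y y' : Fin 3 → ℝ, y 0 = y' 0 → F y = F y')
    (hsymm : ∀ y (a b : Fin 3), a ≠ 0 → b ≠ 0 → F y a b = F y b a) (y : Fin 3 → ℝ)
    (i j k : Fin 3) : torsionH F y i j k = 0 := by
  rcases eq_or_ne i 0 with rfl | hi
  · exact torsionH_zero_eq_zero hF hsymm y j k
  rcases eq_or_ne j 0 with rfl | hj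
  · rw [torsionH_rotate]
    exact torsionH_zero_eq_zero hF hsymm y k i
  rcases eq_or_ne k 0 with rfl | hk
  · rw [← torsionH_rotate]
    exact torsionH_zero_eq_zero hF hsymm y i j
  simp only [torsionH, deriv_Bpot_update_of_ne hF y hi, deriv_Bpot_update_of_ne hF y hj,
    deriv_Bpot_update_of_ne hF y hk, add_zero]

end DependsOnFirst

lemma F41_congr (p u v w q z : ℝ) (y y' : Fin 3 → ℝ) (h : y 0 = y' 0) :
    F41 p u v w q z y = F41 p u v w q z y' := by
  rw [F41, F41, h]

lemma F41_apply_comm (p u v w q z : ℝ) (y : Fin 3 → ℝ) (a b : Fin 3) (ha : a ≠ 0)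
    (hb : b ≠ 0) : F41 p u v w q z y a b = F41 p u v w q z y b a := by
  fin_cases a <;> fin_cases b <;> simp_all [F41]

/-- The sigma model on the Manin triple `(4|1)` is torsionless. -/
theorem torsion41_eq_zero (p u v w q z : ℝ) :
    ∀ (y : Fin 3 → ℝ) (i j k : Fin 3), torsionH (F41 p u v w q z) y i j k = 0 :=
  torsionH_eq_zero_of_depends_only_on_first (F41_congr p u v w q z) (F41_apply_comm p u v w q z)
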